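/- Let p > 1, a < 0 and b ≥ −p. Assume (f,g) ∈ C²(ℝ)×C¹(ℝ) with supp f, supp g ⊂ {x : |x| ≤ R}, R ≥ 1, and ∫_ℝ g(x)dx > 0. Then there exist constants ε₂ = ε₂(g,p,a,b,R) > 0 and C > 0 independent of ε such that for every 0 < ε ≤ ε₂ and every T ≥ C ε^{−(p−1)/(−a)}, there is no continuous solution U ∈ C(ℝ×[0,T]) with supp U ⊂ {(x,t) : |x| ≤ t+R} of the integral equation U = ε u_t⁰ + L'_{a,b}(|U|^p). -/

import Mathlib

open MeasureTheory Set
open scoped Classical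

/-- Japanese bracket `⟨x⟩ = √(1+x²)`. -/
noncomputable def jb (x : ℝ) : ℝ := Real.sqrt (1 + x ^ 2)

/-- The operator `L'_{a,b}`. -/
noncomputable def Lab' (a b : ℝ) (v : ℝ → ℝ → ℝ) (x t : ℝ) : ℝ :=
    (1 / 2) * (∫ s in (0:ℝ)..t,
      v (x + t - s) s /
        (jb (s + jb (x + t - s)) ^ (1 + a) * jb (s - jb (x + t - s)) ^ (1 + b)))
  + (1 / 2) * (∫ s in (0:ℝ)..t,
      v (x - t + s) s /
        (jb (s + jb (x - t + s)) ^ (1 + a) * jb (s - jb (x - t + s)) ^ (1 + b)))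

/-- `u_t⁰(x,t) = (1/2){f'(x+t) − f'(x−t) + g(x+t) + g(x−t)}`. -/
noncomputable def ut0 (f g : ℝ → ℝ) (x t : ℝ) : ℝ :=
  (1 / 2) * (deriv f (x + t) - deriv f (x - t) + g (x + t) + g (x - t))

/-- Indicator `χ(x,t)` of the region `t − |x| > R`. -/
noncomputable def chiR (R x t : ℝ) : ℝ := if R < t - |x| then 1 else 0

/-- The weight function `w(x,t)`. -/
noncomputable def wgt (a R x t : ℝ) : ℝ :=
  if 0 < a then chiR R x t * (1 + t - |x|) ^ (1 + a) + (1 - chiR R x t)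
  else if a = 0 then
    chiR R x t * (1 + t - |x|) + (1 - chiR R x t) / Real.log (t + |x| + R)
  else if -1 ≤ a then
    chiR R x t * (1 + t - |x|) ^ (1 + a) + (1 - chiR R x t) * (t + |x| + R) ^ a
  else chiR R x t * (1 + t + |x|) ^ (1 + a) + (1 - chiR R x t) * (t + |x| + R) ^ a

/-- The weighted sup-norm `‖U‖ = sup_{ℝ×[0,T]} |w(x,t)U(x,t)|`. -/
noncomputable def wnorm (a R T : ℝ) (U : ℝ → ℝ → ℝ) : ℝ :=
  ⨆ q : ℝ × Set.Icc (0:ℝ) T, |wgt a R q.1 (q.2 : ℝ) * U q.1 (q.2 : ℝ)|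

/-- The quantity `E_{a,b}(T)`. -/
noncomputable def Eab (p a b R T : ℝ) : ℝ :=
  if 0 < a ∧ 0 < p * (1 + a) + b then 1
  else if a = 0 ∧ -p ≤ b then Real.log (T + 3 * R) ^ p
  else if 0 < a ∧ p * (1 + a) + b = 0 then Real.log (T + 3 * R)
  else if a < 0 ∧ -p ≤ b then (T + 2 * R) ^ (-(a * p))
  else (T + 2 * R) ^ (-(p * (1 + a)) - b)

/-- The quantity `D_a(T)`. -/
noncomputable def Da (a R T : ℝ) : ℝ :=
  if 0 < a then 1
  else if a = 0 then Real.log (T + 3 * R)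
  else (T + 2 * R) ^ (-a)

/-- The five regimes of parameters `(a,b)` appearing in the lifespan estimates. -/
def Regime (p a b : ℝ) : Prop :=
  (0 < a ∧ 0 < p * (1 + a) + b) ∨ (a = 0 ∧ -p ≤ b) ∨
  (0 < a ∧ p * (1 + a) + b = 0) ∨ (a < 0 ∧ -p ≤ b) ∨
  (p * (1 + a) + b < 0 ∧ b < -p)

/-- `u` is a classical solution of the IVP
`u_tt − u_xx = |u_t|^p / (⟨t+⟨x⟩⟩^{1+a}⟨t−⟨x⟩⟩^{1+b})` on `ℝ × [0,T]`
with data `u(x,0) = εf(x)`, `u_t(x,0) = εg(x)`. -/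
def IsClassicalSol (p a b ε T : ℝ) (f g : ℝ → ℝ) (u : ℝ → ℝ → ℝ) : Prop :=
  ContDiffOn ℝ 2 (fun q : ℝ × ℝ => u q.1 q.2)
    ((Set.univ : Set ℝ) ×ˢ Set.Icc (0:ℝ) T) ∧
  (∀ x t : ℝ, 0 < t → t < T →
    deriv (deriv (fun τ => u x τ)) t - deriv (deriv (fun y => u y t)) x
      = |deriv (fun τ => u x τ) t| ^ p /
          (jb (t + jb x) ^ (1 + a) * jb (t - jb x) ^ (1 + b))) ∧
  (∀ x : ℝ, u x 0 = ε * f x) ∧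
  (∀ x : ℝ, deriv (fun τ => u x τ) 0 = ε * g x)

/-- `U` is a continuous solution, supported in `{|x| ≤ t+R}`, of the integral
equation `U = ε u_t⁰ + L'_{a,b}(|U|^p)` on `ℝ × [0,T]`. -/
def IsIntSol (p a b R ε T : ℝ) (f g : ℝ → ℝ) (U : ℝ → ℝ → ℝ) : Prop :=
  ContinuousOn (fun q : ℝ × ℝ => U q.1 q.2)
    ((Set.univ : Set ℝ) ×ˢ Set.Icc (0:ℝ) T) ∧
  (∀ x t : ℝ, 0 ≤ t → t ≤ T → t + R < |x| → U x t = 0) ∧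
  (∀ x t : ℝ, 0 ≤ t → t ≤ T →
    U x t = ε * ut0 f g x t + Lab' a b (fun y s => |U y s| ^ p) x t)

/-!
Integrate `U` over the strip `|x - t| ≤ R` next to the edge of its support:
`H(t) = ∫_{-R}^{R} U(ξ + t, t) dξ`. Along the characteristic `x - t = ξ` the weight in
`L'_{a,b}` is comparable to `(1 + s)^{1+a}`, once `t > R` the free wave contributes exactly
`ε ∫ g / 2` to the strip, and Jensen's inequality bounds `∫ |U|^p` below by `|H|^p / (2R)^{p-1}`.
Hence `H(t) ≥ ε ∫ g / 2 + c ∫_{t₀}^{t} |H(s)|^p (1 + s)^{-1-a} ds`, and a Bernoulli-type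
comparison shows that such an `H` cannot survive past the time where
`∫_{t₀}^{T} (1 + s)^{-1-a} ds ~ T^{-a} / (-a)` reaches a multiple of `(ε ∫ g)^{1-p}`.
-/

open Function

lemma jb_pos (x : ℝ) : 0 < jb x := Real.sqrt_pos.mpr (by positivity)

lemma one_le_jb (x : ℝ) : 1 ≤ jb x :=
  Real.le_sqrt_of_sq_le (by nlinarith [sq_nonneg x])

lemma abs_le_jb (x : ℝ) : |x| ≤ jb x :=
  Real.abs_le_sqrt (by nlinarith)

lemma jb_le_one_add_abs (x : ℝ) : jb x ≤ 1 + |x| :=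
  Real.sqrt_le_left (by positivity) |>.mpr (by nlinarith [abs_nonneg x, sq_abs x])

@[fun_prop]
lemma continuous_jb : Continuous jb := by unfold jb; fun_prop

lemma rpow_le_rpow_max_mul_rpow {x y M : ℝ} (r : ℝ) (hx : 0 < x) (hxy : x ≤ y)
    (hyM : y ≤ M * x) : y ^ r ≤ M ^ max r 0 * x ^ r := by
  have hM : 0 ≤ M := nonneg_of_mul_nonneg_left (hx.le.trans (hxy.trans hyM)) hx
  rcases le_total 0 r with hr | hr
  · rw [max_eq_left hr, ← Real.mul_rpow hM hx.le]
    exact Real.rpow_le_rpow (hx.le.trans hxy) hyM hr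
  · rw [max_eq_right hr, Real.rpow_zero, one_mul]
    exact Real.rpow_le_rpow_of_nonpos hx hxy hr

lemma continuousOn_one_add_rpow (r : ℝ) :
    ContinuousOn (fun s : ℝ => (1 + s) ^ r) (Ioi (-1)) :=
  ContinuousOn.rpow_const (by fun_prop) fun s hs => Or.inl (by linarith [mem_Ioi.mp hs])

lemma integral_one_add_rpow_neg_one_add {a t₀ T : ℝ} (ha : a ≠ 0) (ht₀ : -1 < t₀)
    (hT : -1 < T) :
    ∫ s in t₀..T, (1 + s) ^ (-(1 + a)) = ((1 + T) ^ (-a) - (1 + t₀) ^ (-a)) / (-a) := by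
  rw [intervalIntegral.integral_comp_add_left (fun x => x ^ (-(1 + a))), integral_rpow]
  · rw [show -(1 + a) + 1 = -a by ring]
  · exact Or.inr ⟨fun h => ha (by linarith), notMem_uIcc_of_lt (by linarith) (by linarith)⟩

lemma exists_const_le_rpow {α β A B : ℝ} (hα : 0 < α) (hβ : 0 ≤ β) (hA : 0 ≤ A)
    (hB : 0 ≤ B) :
    ∃ C > 0, ∀ ε, 0 < ε → ε ≤ 1 → ∀ T, C * ε ^ (-(β / α)) ≤ T →
      A + B * ε ^ (-β) ≤ T ^ α := by
  refine ⟨(A + B + 1) ^ α⁻¹, by positivity, fun ε hε hε1 T hT => ?_⟩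
  have h1 : 1 ≤ ε ^ (-β) := Real.one_le_rpow_of_pos_of_le_one_of_nonpos hε hε1 (by linarith)
  calc A + B * ε ^ (-β) ≤ (A + B + 1) * ε ^ (-β) := by nlinarith
    _ = ((A + B + 1) ^ α⁻¹ * ε ^ (-(β / α))) ^ α := by
        rw [Real.mul_rpow (by positivity) (by positivity), ← Real.rpow_mul (by positivity),
          ← Real.rpow_mul hε.le, inv_mul_cancel₀ hα.ne', Real.rpow_one]
        congr 2
        field_simp
    _ ≤ T ^ α := Real.rpow_le_rpow (by positivity) hT hα.le

lemma continuousOn_intervalIntegral_of_continuousOn_prod {X : Type*} [TopologicalSpace X]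
    {F : X → ℝ → ℝ} {s : Set X} {α β : ℝ} (hαβ : α ≤ β)
    (hF : ContinuousOn (uncurry F) (s ×ˢ Icc α β)) :
    ContinuousOn (fun x => ∫ y in α..β, F x y) s := by
  rw [continuousOn_iff_continuous_domRestrict]
  -- Clamping `y` to `[α, β]` makes the integrand jointly continuous without changing the integral.
  have hG : Continuous fun q : s × ℝ => F q.1 (projIcc α β hαβ q.2) :=
    hF.comp_continuous (f := fun q : s × ℝ => ((q.1 : X), (projIcc α β hαβ q.2 : ℝ)))
      (by fun_prop) fun q => ⟨q.1.2, Subtype.mem _⟩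
  refine (intervalIntegral.continuous_parametric_intervalIntegral_of_continuous'
    (f := fun (x : s) y => F x (projIcc α β hαβ y)) (μ := volume) hG α β).congr fun x => ?_
  refine intervalIntegral.integral_congr fun y hy => ?_
  rw [uIcc_of_le hαβ] at hy
  simp [projIcc_of_mem hαβ hy]

lemma abs_intervalIntegral_rpow_le {F : ℝ → ℝ} {α β p : ℝ} (hαβ : α < β) (hp : 1 ≤ p)
    (hF : ContinuousOn F (Icc α β)) :
    |∫ x in α..β, F x| ^ p ≤ (β - α) ^ (p - 1) * ∫ x in α..β, |F x| ^ p := by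
  have hβα : 0 < β - α := sub_pos.mpr hαβ
  have hint : ∀ {G : ℝ → ℝ}, ContinuousOn G (Icc α β) → IntegrableOn G (uIoc α β) :=
    fun hG => hG.integrableOn_Icc.mono_set (uIoc_of_le hαβ.le ▸ Ioc_subset_Icc_self)
  have hvol : volume (uIoc α β) = ENNReal.ofReal (β - α) := by
    rw [uIoc_of_le hαβ.le, Real.volume_Ioc]
  have hJensen : (⨍ x in α..β, |F x|) ^ p ≤ ⨍ x in α..β, |F x| ^ p :=
    (convexOn_rpow hp).map_set_average_le
      (continuousOn_id.rpow_const fun _ _ => Or.inr (by linarith)) isClosed_Ici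
      (by simp [hvol, hαβ]) (by simp [hvol])
      (Filter.Eventually.of_forall fun x => abs_nonneg (F x)) (hint hF.abs)
      (hint (hF.abs.rpow_const fun _ _ => Or.inr (by linarith)))
  rw [interval_average_eq_div, interval_average_eq_div,
    Real.div_rpow (intervalIntegral.integral_nonneg hαβ.le fun _ _ => abs_nonneg _) hβα.le,
    div_le_div_iff₀ (by positivity) hβα] at hJensen
  calc |∫ x in α..β, F x| ^ p ≤ (∫ x in α..β, |F x|) ^ p :=
        Real.rpow_le_rpow (abs_nonneg _)
          (intervalIntegral.abs_integral_le_integral_abs hαβ.le) (by linarith)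
    _ = (∫ x in α..β, |F x|) ^ p * (β - α) / (β - α) ^ p * (β - α) ^ (p - 1) := by
        rw [Real.rpow_sub_one hβα.ne']; field_simp
    _ ≤ (β - α) ^ (p - 1) * ∫ x in α..β, |F x| ^ p := by
        rw [div_mul_eq_mul_div, div_le_iff₀ (by positivity)]
        nlinarith [hJensen, Real.rpow_pos_of_pos hβα (p - 1)]

lemma hasDerivAt_intervalIntegral_of_continuousOn {q : ℝ → ℝ} {α β x : ℝ}
    (hq : ContinuousOn q (Icc α β)) (hx : x ∈ Ioo α β) :
    HasDerivAt (fun u => ∫ s in α..u, q s) (q x) x :=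
  intervalIntegral.integral_hasDerivAt_right
    ((hq.mono (Icc_subset_Icc le_rfl hx.2.le)).intervalIntegrable_of_Icc hx.1.le)
    ((hq.mono Ioo_subset_Icc_self).stronglyMeasurableAtFilter isOpen_Ioo x hx)
    (hq.continuousAt (Icc_mem_nhds hx.1 hx.2))

lemma continuousOn_primitive_Icc {q : ℝ → ℝ} {α β : ℝ} (hαβ : α ≤ β)
    (hq : ContinuousOn q (Icc α β)) :
    ContinuousOn (fun u => ∫ s in α..u, q s) (Icc α β) := by
  simpa [uIcc_of_le hαβ] using intervalIntegral.continuousOn_primitive_interval (μ := volume)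
    (hq.integrableOn_Icc.mono_set (uIcc_of_le hαβ).subset)

theorem mul_integral_lt_rpow_of_le_add_integral_rpow {H w : ℝ → ℝ} {t₀ T A c p : ℝ}
    (hp : 1 < p) (hA : 0 < A) (hc : 0 ≤ c) (ht₀T : t₀ ≤ T) (hH : ContinuousOn H (Icc t₀ T))
    (hw : ContinuousOn w (Icc t₀ T)) (hw0 : ∀ s ∈ Icc t₀ T, 0 ≤ w s)
    (hHA : ∀ t ∈ Icc t₀ T, A + c * ∫ s in t₀..t, |H s| ^ p * w s ≤ H t) :
    (p - 1) * c * ∫ s in t₀..T, w s < A ^ (1 - p) := by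
  set q := fun s => |H s| ^ p * w s
  have hq : ContinuousOn q (Icc t₀ T) :=
    (hH.abs.rpow_const fun _ _ => Or.inr (by linarith)).mul hw
  set Φ := fun t => A + c * ∫ s in t₀..t, q s
  have hΦpos : ∀ t ∈ Icc t₀ T, 0 < Φ t := fun t ht =>
    add_pos_of_pos_of_nonneg hA <| mul_nonneg hc <| intervalIntegral.integral_nonneg ht.1
      fun s hs => mul_nonneg (by positivity) (hw0 s ⟨hs.1, hs.2.trans ht.2⟩)
  -- `Φ ^ (1 - p)` decreases at least as fast as `(p - 1) c ∫ w` grows, and stays positive.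
  set G := fun t => Φ t ^ (1 - p) + (p - 1) * c * ∫ s in t₀..t, w s
  have hG : AntitoneOn G (Icc t₀ T) := by
    refine antitoneOn_of_hasDerivWithinAt_nonpos (convex_Icc _ _)
      (f' := fun t => (1 - p) * Φ t ^ (-p) * (c * q t) + (p - 1) * c * w t) ?_ ?_ ?_
    · exact ((continuousOn_const.add (continuousOn_const.mul
        (continuousOn_primitive_Icc ht₀T hq))).rpow_const fun t ht => Or.inl (hΦpos t ht).ne').add
        (continuousOn_const.mul (continuousOn_primitive_Icc ht₀T hw))
    · rw [interior_Icc]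
      intro t ht
      have hΦ : HasDerivAt Φ (c * q t) t :=
        ((hasDerivAt_intervalIntegral_of_continuousOn hq ht).const_mul c).const_add A
      have hderiv := (hΦ.rpow_const (p := 1 - p)
        (Or.inl (hΦpos t (Ioo_subset_Icc_self ht)).ne')).add
        ((hasDerivAt_intervalIntegral_of_continuousOn hw ht).const_mul ((p - 1) * c))
      refine hderiv.hasDerivWithinAt.congr_deriv ?_
      rw [show 1 - p - 1 = -p by ring]
      ring
    · rw [interior_Icc]
      intro t ht
      have htIcc := Ioo_subset_Icc_self ht
      have hΦt := hΦpos t htIcc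
      have hΦH : Φ t ^ p ≤ |H t| ^ p :=
        Real.rpow_le_rpow hΦt.le ((hHA t htIcc).trans (le_abs_self _)) (by linarith)
      have hratio : 1 ≤ Φ t ^ (-p) * |H t| ^ p := by
        rw [Real.rpow_neg hΦt.le, inv_mul_eq_div, one_le_div (Real.rpow_pos_of_pos hΦt p)]
        exact hΦH
      calc (1 - p) * Φ t ^ (-p) * (c * q t) + (p - 1) * c * w t
          = (p - 1) * c * w t * (1 - Φ t ^ (-p) * |H t| ^ p) := by ring
        _ ≤ 0 := mul_nonpos_of_nonneg_of_nonpos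
            (mul_nonneg (mul_nonneg (by linarith) hc) (hw0 t htIcc)) (by linarith)
  have hGT := hG ⟨le_rfl, ht₀T⟩ ⟨ht₀T, le_rfl⟩ ht₀T
  simp only [G, Φ, intervalIntegral.integral_same, mul_zero, add_zero] at hGT
  linarith [Real.rpow_pos_of_pos (hΦpos T ⟨ht₀T, le_rfl⟩) (1 - p)]

lemma eq_zero_of_le_abs {f : ℝ → ℝ} {R x : ℝ} (hf : Continuous f)
    (hsf : ∀ x, R < |x| → f x = 0) (hx : R ≤ |x|) : f x = 0 := by
  have hclosed := isClosed_singleton.preimage hf (t := {0})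
  rcases le_total 0 x with h0 | h0
  · have hright : Ici R ⊆ f ⁻¹' {0} := closure_Ioi R ▸ hclosed.closure_subset_iff.mpr
      fun y hy => hsf y ((mem_Ioi.mp hy).trans_le (le_abs_self y))
    exact hright (by rwa [abs_of_nonneg h0] at hx)
  · have hleft : Iic (-R) ⊆ f ⁻¹' {0} := closure_Iio (-R) ▸ hclosed.closure_subset_iff.mpr
      fun y hy => hsf y ((lt_neg_of_lt_neg (mem_Iio.mp hy)).trans_le (neg_le_abs y))
    exact hleft (by rw [abs_of_nonpos h0] at hx; exact mem_Iic.mpr (by linarith))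

lemma deriv_eq_zero_of_lt_abs {f : ℝ → ℝ} {R x : ℝ} (hsf : ∀ x, R < |x| → f x = 0)
    (hx : R < |x|) : deriv f x = 0 := by
  have hloc : f =ᶠ[nhds x] fun _ => 0 := Filter.mem_of_superset
    ((isOpen_lt continuous_const continuous_abs).mem_nhds hx) fun y hy => hsf y hy
  rw [hloc.deriv_eq, deriv_const]

lemma intervalIntegral_eq_integral_of_lt_abs {g : ℝ → ℝ} {R : ℝ} (hR : 0 ≤ R)
    (hsg : ∀ x, R < |x| → g x = 0) : ∫ x in -R..R, g x = ∫ x, g x := by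
  rw [intervalIntegral.integral_of_le (by linarith), ← integral_Icc_eq_integral_Ioc]
  exact setIntegral_eq_integral_of_forall_compl_eq_zero fun x hx =>
    hsg x (not_le.mp fun h => hx (abs_le.mp h))

noncomputable def labWeight (a b y s : ℝ) : ℝ := jb (s + jb y) ^ (1 + a) * jb (s - jb y) ^ (1 + b)

lemma Lab'_eq (a b : ℝ) (v : ℝ → ℝ → ℝ) (x t : ℝ) :
    Lab' a b v x t = 1 / 2 * (∫ s in 0..t, v (x + t - s) s / labWeight a b (x + t - s) s)
      + 1 / 2 * ∫ s in 0..t, v (x - t + s) s / labWeight a b (x - t + s) s :=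
  rfl

lemma labWeight_pos (a b y s : ℝ) : 0 < labWeight a b y s :=
  mul_pos (Real.rpow_pos_of_pos (jb_pos _) _) (Real.rpow_pos_of_pos (jb_pos _) _)

lemma continuous_labWeight (a b : ℝ) : Continuous (uncurry (labWeight a b)) :=
  ((by fun_prop : Continuous fun q : ℝ × ℝ => jb (q.2 + jb q.1)).rpow_const
      fun _ => Or.inl (jb_pos _).ne').mul
    ((by fun_prop : Continuous fun q : ℝ × ℝ => jb (q.2 - jb q.1)).rpow_const
      fun _ => Or.inl (jb_pos _).ne')

noncomputable def weightConst (a b R : ℝ) : ℝ :=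
  (R + 3) ^ max (1 + a) 0 * (R + 2) ^ max (1 + b) 0

lemma weightConst_pos (a b : ℝ) {R : ℝ} (hR : 0 ≤ R) : 0 < weightConst a b R := by
  unfold weightConst; positivity

-- Along `x = ξ + s` with `|ξ| ≤ R`, `s - ⟨x⟩` stays bounded, so only the first factor grows.
lemma labWeight_le (a b : ℝ) {R ξ s : ℝ} (hξ : |ξ| ≤ R) (hs : 0 ≤ s) :
    labWeight a b (ξ + s) s ≤ weightConst a b R * (1 + s) ^ (1 + a) := by
  have hR : 0 ≤ R := (abs_nonneg ξ).trans hξ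
  have hξs : |ξ + s| ≤ R + s := (abs_add_le ξ s).trans (by rw [abs_of_nonneg hs]; linarith)
  have hjb := jb_le_one_add_abs (ξ + s)
  have hjb' := (le_abs_self (ξ + s)).trans (abs_le_jb (ξ + s))
  have hξ' := neg_abs_le ξ
  have hfar : jb (s + jb (ξ + s)) ^ (1 + a) ≤ (R + 3) ^ max (1 + a) 0 * (1 + s) ^ (1 + a) := by
    have h1 : 1 + s ≤ s + jb (ξ + s) := by linarith [one_le_jb (ξ + s)]
    refine rpow_le_rpow_max_mul_rpow _ (by linarith) ?_ ?_
    · exact h1.trans ((le_abs_self _).trans (abs_le_jb _))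
    · have := jb_le_one_add_abs (s + jb (ξ + s))
      rw [abs_of_nonneg (by linarith)] at this
      nlinarith
  have hnear : jb (s - jb (ξ + s)) ^ (1 + b) ≤ (R + 2) ^ max (1 + b) 0 := by
    have h := rpow_le_rpow_max_mul_rpow (1 + b) one_pos (one_le_jb (s - jb (ξ + s)))
      (M := R + 2) ?_
    · rwa [Real.one_rpow, mul_one] at h
    · have : |s - jb (ξ + s)| ≤ R + 1 := abs_le.mpr ⟨by linarith, by linarith⟩
      linarith [jb_le_one_add_abs (s - jb (ξ + s))]
  calc labWeight a b (ξ + s) s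
      ≤ ((R + 3) ^ max (1 + a) 0 * (1 + s) ^ (1 + a)) * (R + 2) ^ max (1 + b) 0 :=
        mul_le_mul hfar hnear (Real.rpow_pos_of_pos (jb_pos _) _).le (by positivity)
    _ = weightConst a b R * (1 + s) ^ (1 + a) := by unfold weightConst; ring

lemma le_Lab'_char {a b R : ℝ} {v : ℝ → ℝ → ℝ} (hv : ∀ y s, 0 ≤ v y s) {ξ t : ℝ}
    (hξ : |ξ| ≤ R) (ht : 0 ≤ t) (hvc : ContinuousOn (fun s => v (ξ + s) s) (Icc 0 t)) :
    (2 * weightConst a b R)⁻¹ * ∫ s in 0..t, v (ξ + s) s * (1 + s) ^ (-(1 + a)) ≤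
      Lab' a b v (ξ + t) t := by
  set K := weightConst a b R
  have hK : 0 < K := weightConst_pos a b ((abs_nonneg ξ).trans hξ)
  have hforward : 0 ≤ ∫ s in 0..t, v (ξ + t + t - s) s / labWeight a b (ξ + t + t - s) s :=
    intervalIntegral.integral_nonneg ht fun s _ => div_nonneg (hv _ _) (labWeight_pos _ _ _ _).le
  have hweight : ContinuousOn (fun s : ℝ => (1 + s) ^ (-(1 + a))) (Icc 0 t) :=
    (continuousOn_one_add_rpow _).mono fun s hs => mem_Ioi.mpr (by linarith [hs.1])
  have hden : Continuous fun s => labWeight a b (ξ + s) s :=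
    (continuous_labWeight a b).comp (by fun_prop : Continuous fun s : ℝ => (ξ + s, s))
  have hbackward : K⁻¹ * ∫ s in 0..t, v (ξ + s) s * (1 + s) ^ (-(1 + a)) ≤
      ∫ s in 0..t, v (ξ + s) s / labWeight a b (ξ + s) s := by
    rw [← intervalIntegral.integral_const_mul]
    refine intervalIntegral.integral_mono_on ht
      ((continuousOn_const.mul (hvc.mul hweight)).intervalIntegrable_of_Icc ht)
      ((hvc.div hden.continuousOn fun s _ => (labWeight_pos _ _ _ _).ne')
        |>.intervalIntegrable_of_Icc ht) fun s hs => ?_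
    calc K⁻¹ * (v (ξ + s) s * (1 + s) ^ (-(1 + a)))
        = v (ξ + s) s / (K * (1 + s) ^ (1 + a)) := by
          rw [Real.rpow_neg (by linarith [hs.1])]; field_simp
      _ ≤ _ := div_le_div_of_nonneg_left (hv _ _) (labWeight_pos _ _ _ _)
          (labWeight_le a b hξ hs.1)
  rw [Lab'_eq]
  simp only [add_sub_cancel_right]
  rw [mul_inv, mul_assoc]
  linarith

lemma le_intervalIntegral_Lab'_char {a b R t : ℝ} {v : ℝ → ℝ → ℝ} (hv : ∀ y s, 0 ≤ v y s)
    (hR : 0 ≤ R) (ht : 0 ≤ t)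
    (hvc : ContinuousOn (fun q : ℝ × ℝ => v (q.1 + q.2) q.2) (Icc (-R) R ×ˢ Icc 0 t))
    (hLab : IntervalIntegrable (fun ξ => Lab' a b v (ξ + t) t) volume (-R) R) :
    (2 * weightConst a b R)⁻¹ *
        ∫ s in 0..t, (∫ ξ in -R..R, v (ξ + s) s) * (1 + s) ^ (-(1 + a)) ≤
      ∫ ξ in -R..R, Lab' a b v (ξ + t) t := by
  have hRR : -R ≤ R := by linarith
  have hF : ContinuousOn (fun q : ℝ × ℝ => v (q.1 + q.2) q.2 * (1 + q.2) ^ (-(1 + a)))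
      (Icc (-R) R ×ˢ Icc 0 t) :=
    hvc.mul ((continuousOn_one_add_rpow _).comp continuous_snd.continuousOn
      fun q hq => mem_Ioi.mpr (by linarith [hq.2.1]))
  have hFubini : ∫ s in 0..t, (∫ ξ in -R..R, v (ξ + s) s) * (1 + s) ^ (-(1 + a)) =
      ∫ ξ in -R..R, ∫ s in 0..t, v (ξ + s) s * (1 + s) ^ (-(1 + a)) := by
    simp_rw [← intervalIntegral.integral_mul_const]
    refine (intervalIntegral_intervalIntegral_swap ?_).symm
    refine (hF.integrableOn_compact (isCompact_Icc.prod isCompact_Icc)).mono_set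
      (prod_mono ?_ ?_) <;> simp [uIoc_of_le, hRR, ht, Ioc_subset_Icc_self]
  rw [hFubini, ← intervalIntegral.integral_const_mul]
  refine intervalIntegral.integral_mono_on hRR ?_ hLab fun ξ hξ => le_Lab'_char hv
    (abs_le.mpr hξ) ht (hvc.comp (by fun_prop : Continuous fun s : ℝ => (ξ, s)).continuousOn
      fun s hs => ⟨hξ, hs⟩)
  exact (continuousOn_const.mul (continuousOn_intervalIntegral_of_continuousOn_prod ht hF))
    |>.intervalIntegrable_of_Icc hRR

lemma intervalIntegral_ut0_char {f g : ℝ → ℝ} {R t : ℝ} (hR : 0 ≤ R) (hf : ContDiff ℝ 1 f)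
    (hg : Continuous g) (hsf : ∀ x, R < |x| → f x = 0) (hsg : ∀ x, R < |x| → g x = 0)
    (ht : R < t) : ∫ ξ in -R..R, ut0 f g (ξ + t) t = (∫ x, g x) / 2 := by
  have hf' := hf.continuous_deriv_one
  -- For `t > R` the incoming wave `ξ + 2t` has left the support of the data.
  have hdata : EqOn (fun ξ => ut0 f g (ξ + t) t) (fun ξ => (g ξ - deriv f ξ) / 2)
      (uIcc (-R) R) := by
    intro ξ hξ
    rw [uIcc_of_le (by linarith)] at hξ
    have hfar : R < |ξ + t + t| := by
      rw [abs_of_pos (by linarith [hξ.1])]; linarith [hξ.1]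
    simp only [ut0, add_sub_cancel_right, deriv_eq_zero_of_lt_abs hsf hfar, hsg _ hfar]
    ring
  rw [intervalIntegral.integral_congr hdata, intervalIntegral.integral_div,
    intervalIntegral.integral_sub (hg.intervalIntegrable _ _) (hf'.intervalIntegrable _ _),
    intervalIntegral.integral_deriv_eq_sub
      (fun x _ => (hf.differentiable one_ne_zero).differentiableAt) (hf'.intervalIntegrable _ _),
    eq_zero_of_le_abs hf.continuous hsf (le_abs_self R),
    eq_zero_of_le_abs hf.continuous hsf (abs_neg R ▸ le_abs_self R),
    intervalIntegral_eq_integral_of_lt_abs hR hsg]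
  ring

noncomputable def charIntegral (R : ℝ) (U : ℝ → ℝ → ℝ) (t : ℝ) : ℝ :=
  ∫ ξ in -R..R, U (ξ + t) t

lemma rpow_abs_charIntegral_le {p R s : ℝ} {U : ℝ → ℝ → ℝ} (hp : 1 ≤ p) (hR : 0 < R)
    (hU : ContinuousOn (fun ξ => U (ξ + s) s) (Icc (-R) R)) :
    (2 * R) ^ (1 - p) * |charIntegral R U s| ^ p ≤ ∫ ξ in -R..R, |U (ξ + s) s| ^ p := by
  have h2R : 0 < 2 * R := by linarith
  have hJ := abs_intervalIntegral_rpow_le (by linarith) hp hU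
  rw [show R - -R = 2 * R by ring] at hJ
  calc (2 * R) ^ (1 - p) * |charIntegral R U s| ^ p
      ≤ (2 * R) ^ (1 - p) * ((2 * R) ^ (p - 1) * ∫ ξ in -R..R, |U (ξ + s) s| ^ p) := by
        gcongr; exact hJ
    _ = _ := by
        rw [← mul_assoc, ← Real.rpow_add h2R, show 1 - p + (p - 1) = 0 by ring,
          Real.rpow_zero, one_mul]

section IntegralEquation

variable {p a b R ε T : ℝ} {f g : ℝ → ℝ} {U : ℝ → ℝ → ℝ}

lemma IsIntSol.continuousOn_char (hU : IsIntSol p a b R ε T f g U) :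
    ContinuousOn (fun q : ℝ × ℝ => U (q.1 + q.2) q.2) (univ ×ˢ Icc 0 T) :=
  hU.1.comp (by fun_prop : Continuous fun q : ℝ × ℝ => (q.1 + q.2, q.2)).continuousOn
    fun _ hq => ⟨mem_univ _, hq.2⟩

lemma IsIntSol.le_charIntegral (hU : IsIntSol p a b R ε T f g U) (hp : 0 ≤ p) (hR : 0 ≤ R)
    (hf : ContDiff ℝ 1 f) (hg : Continuous g) (hsf : ∀ x, R < |x| → f x = 0)
    (hsg : ∀ x, R < |x| → g x = 0) {t : ℝ} (ht : R < t) (htT : t ≤ T) :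
    ε * ((∫ x, g x) / 2) + (2 * weightConst a b R)⁻¹ *
        ∫ s in 0..t, (∫ ξ in -R..R, |U (ξ + s) s| ^ p) * (1 + s) ^ (-(1 + a)) ≤
      charIntegral R U t := by
  have ht0 : 0 ≤ t := by linarith
  have hUc := hU.continuousOn_char
  have hUt : Continuous fun ξ => U (ξ + t) t :=
    hUc.comp_continuous (f := fun ξ : ℝ => (ξ, t)) (by fun_prop) fun _ => ⟨mem_univ _, ht0, htT⟩
  have hdata : Continuous fun ξ => ut0 f g (ξ + t) t := by
    have := hf.continuous_deriv_one
    unfold ut0; fun_prop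
  have hLab : ∀ ξ, Lab' a b (fun y s => |U y s| ^ p) (ξ + t) t =
      U (ξ + t) t - ε * ut0 f g (ξ + t) t := fun ξ => by
    rw [hU.2.2 _ _ ht0 htT]; ring
  have hLabi : IntervalIntegrable (fun ξ => Lab' a b (fun y s => |U y s| ^ p) (ξ + t) t)
      volume (-R) R := by
    simp_rw [hLab]; exact (hUt.sub (continuous_const.mul hdata)).intervalIntegrable _ _
  have hsplit : charIntegral R U t = ε * (∫ ξ in -R..R, ut0 f g (ξ + t) t) +
      ∫ ξ in -R..R, Lab' a b (fun y s => |U y s| ^ p) (ξ + t) t := by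
    rw [← intervalIntegral.integral_const_mul, ← intervalIntegral.integral_add
      ((hdata.intervalIntegrable _ _).const_mul ε) hLabi]
    exact intervalIntegral.integral_congr fun ξ _ => hU.2.2 _ _ ht0 htT
  rw [hsplit, intervalIntegral_ut0_char hR hf hg hsf hsg ht]
  gcongr
  refine le_intervalIntegral_Lab'_char (fun _ _ => by positivity) hR ht0 ?_ hLabi
  exact (hUc.abs.rpow_const fun _ _ => Or.inr hp).mono
    (prod_mono (subset_univ _) (Icc_subset_Icc_right htT))

theorem IsIntSol.mul_integral_lt_rpow (hU : IsIntSol p a b R ε T f g U) (hp : 1 < p)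
    (hR : 0 < R) (hf : ContDiff ℝ 1 f) (hg : Continuous g) (hsf : ∀ x, R < |x| → f x = 0)
    (hsg : ∀ x, R < |x| → g x = 0) (hε : 0 < ε) (hgint : 0 < ∫ x, g x) {t₀ : ℝ}
    (ht₀ : R < t₀) (ht₀T : t₀ ≤ T) :
    (p - 1) * ((2 * R) ^ (1 - p) / (2 * weightConst a b R)) *
        ∫ s in t₀..T, (1 + s) ^ (-(1 + a)) < (ε * ((∫ x, g x) / 2)) ^ (1 - p) := by
  have hK := weightConst_pos a b hR.le
  have hUc := hU.continuousOn_char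
  have hswap : MapsTo Prod.swap (Icc 0 T ×ˢ Icc (-R) R) (univ ×ˢ Icc 0 T) :=
    fun q hq => ⟨mem_univ _, hq.1⟩
  have hH : ContinuousOn (charIntegral R U) (Icc 0 T) :=
    continuousOn_intervalIntegral_of_continuousOn_prod (F := fun t ξ => U (ξ + t) t)
      (by linarith) (hUc.comp continuous_swap.continuousOn hswap)
  have hP : ContinuousOn (fun s => ∫ ξ in -R..R, |U (ξ + s) s| ^ p) (Icc 0 T) :=
    continuousOn_intervalIntegral_of_continuousOn_prod (F := fun s ξ => |U (ξ + s) s| ^ p)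
      (by linarith) ((hUc.abs.rpow_const fun _ _ => Or.inr (by linarith)).comp
        continuous_swap.continuousOn hswap)
  have hw : ContinuousOn (fun s : ℝ => (1 + s) ^ (-(1 + a))) (Icc 0 T) :=
    (continuousOn_one_add_rpow _).mono fun s hs => mem_Ioi.mpr (by linarith [hs.1])
  have hsub : Icc t₀ T ⊆ Icc 0 T := Icc_subset_Icc_left (by linarith)
  refine mul_integral_lt_rpow_of_le_add_integral_rpow hp (by positivity) (by positivity) ht₀T
    (hH.mono hsub) (hw.mono hsub) (fun s hs => Real.rpow_nonneg (by linarith [hs.1]) _)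
    fun t ht => ?_
  have hsub' : Icc t₀ t ⊆ Icc 0 T := (Icc_subset_Icc_right ht.2).trans hsub
  refine le_trans ?_
    (hU.le_charIntegral (by linarith) hR.le hf hg hsf hsg (ht₀.trans_le ht.1) ht.2)
  gcongr _ + ?_
  calc (2 * R) ^ (1 - p) / (2 * weightConst a b R) *
        ∫ s in t₀..t, |charIntegral R U s| ^ p * (1 + s) ^ (-(1 + a))
      = (2 * weightConst a b R)⁻¹ * ∫ s in t₀..t,
          (2 * R) ^ (1 - p) * |charIntegral R U s| ^ p * (1 + s) ^ (-(1 + a)) := by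
        simp_rw [mul_assoc, intervalIntegral.integral_const_mul]; ring
    _ ≤ (2 * weightConst a b R)⁻¹ *
          ∫ s in t₀..t, (∫ ξ in -R..R, |U (ξ + s) s| ^ p) * (1 + s) ^ (-(1 + a)) := by
        gcongr
        refine intervalIntegral.integral_mono_on ht.1 ?_ ((hP.mul hw).mono hsub'
          |>.intervalIntegrable_of_Icc ht.1) fun s hs => ?_
        · exact (continuousOn_const.mul (hH.abs.rpow_const fun _ _ => Or.inr (by linarith))).mul
            hw |>.mono hsub' |>.intervalIntegrable_of_Icc ht.1
        · refine mul_le_mul_of_nonneg_right (rpow_abs_charIntegral_le hp.le hR ?_)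
            (Real.rpow_nonneg (by linarith [hs.1]) _)
          exact hUc.comp (by fun_prop : Continuous fun ξ : ℝ => (ξ, s)).continuousOn
            fun _ _ => ⟨mem_univ _, hsub' hs⟩
    _ ≤ _ := by
        gcongr
        refine intervalIntegral.integral_mono_interval (by linarith : (0 : ℝ) ≤ t₀) ht.1 le_rfl
          ?_ ((hP.mul hw).mono (Icc_subset_Icc_right ht.2)
            |>.intervalIntegrable_of_Icc (by linarith [ht.1]))
        refine ae_restrict_of_forall_mem measurableSet_Ioc fun s hs => mul_nonneg ?_
          (Real.rpow_nonneg (by linarith [hs.1]) _)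
        exact intervalIntegral.integral_nonneg (by linarith) fun _ _ => by positivity

end IntegralEquation

theorem blow_up_a_neg_general (p a b R : ℝ) (f g : ℝ → ℝ)
    (hp : 1 < p) (ha : a < 0)
    (hR : 1 ≤ R) (hf : ContDiff ℝ 2 f) (hg : ContDiff ℝ 1 g)
    (hsf : ∀ x : ℝ, R < |x| → f x = 0) (hsg : ∀ x : ℝ, R < |x| → g x = 0) (hgint : 0 < ∫ x : ℝ, g x) :
    ∃ ε₂ : ℝ, 0 < ε₂ ∧ ∃ C : ℝ, 0 < C ∧ ∀ ε : ℝ, 0 < ε → ε ≤ ε₂ →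
      ∀ T : ℝ, C * ε ^ (-((p - 1) / (-a))) ≤ T →
        ¬ ∃ U : ℝ → ℝ → ℝ, IsIntSol p a b R ε T f g U := by
  set t₀ := R + 1
  set cg := (∫ x, g x) / 2
  set D := (p - 1) * ((2 * R) ^ (1 - p) / (2 * weightConst a b R)) / (-a)
  have hD : 0 < D := div_pos (mul_pos (by linarith) (div_pos (by positivity)
    (by linarith [weightConst_pos a b (by linarith : (0 : ℝ) ≤ R)]))) (by linarith)
  -- `C` is chosen so that `D ((1 + T)^(-a) - (1 + t₀)^(-a)) ≥ (ε cg)^(1-p)` on the lifespan.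
  obtain ⟨C, hC, hCT⟩ := exists_const_le_rpow (α := -a) (β := p - 1) (A := (1 + t₀) ^ (-a))
    (B := cg ^ (1 - p) / D) (by linarith) (by linarith) (by positivity) (by positivity)
  refine ⟨1, one_pos, C, hC, fun ε hε hε1 T hT ⟨U, hU⟩ => ?_⟩
  have hCT := hCT ε hε hε1 T hT
  have hT0 : 0 ≤ T := (mul_pos hC (Real.rpow_pos_of_pos hε _)).le.trans hT
  have hBε : 0 ≤ cg ^ (1 - p) / D * ε ^ (-(p - 1)) := by positivity
  have ht₀T : t₀ ≤ T := by
    have h := (Real.rpow_le_rpow_iff (by linarith) hT0 (by linarith : 0 < -a)).mp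
      (by linarith : (1 + t₀) ^ (-a) ≤ T ^ (-a))
    linarith
  have hlife := hU.mul_integral_lt_rpow hp (by linarith) (hf.of_le (by norm_num)) hg.continuous
    hsf hsg hε (by positivity) (by linarith : R < t₀) ht₀T
  rw [integral_one_add_rpow_neg_one_add ha.ne (by linarith) (by linarith),
    Real.mul_rpow hε.le (by positivity)] at hlife
  have hlife' : D * ((1 + T) ^ (-a) - (1 + t₀) ^ (-a)) < ε ^ (1 - p) * cg ^ (1 - p) := by
    convert hlife using 1; ring
  have hDB : D * (cg ^ (1 - p) / D * ε ^ (-(p - 1))) = ε ^ (1 - p) * cg ^ (1 - p) := by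
    rw [neg_sub]; field_simp
  have hTT : T ^ (-a) ≤ (1 + T) ^ (-a) := Real.rpow_le_rpow hT0 (by linarith) (by linarith)
  linarith [mul_le_mul_of_nonneg_left (by linarith : cg ^ (1 - p) / D * ε ^ (-(p - 1)) ≤
    (1 + T) ^ (-a) - (1 + t₀) ^ (-a)) hD.le]

theorem blow_up_a_neg (p a b R : ℝ) (f g : ℝ → ℝ)
    (hp : 1 < p) (ha : a < 0) (hb : -p ≤ b)
    (hR : 1 ≤ R) (hf : ContDiff ℝ 2 f) (hg : ContDiff ℝ 1 g)
    (hsf : ∀ x : ℝ, R < |x| → f x = 0) (hsg : ∀ x : ℝ, R < |x| → g x = 0) (hgint : 0 < ∫ x : ℝ, g x) :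
    ∃ ε₂ : ℝ, 0 < ε₂ ∧ ∃ C : ℝ, 0 < C ∧ ∀ ε : ℝ, 0 < ε → ε ≤ ε₂ →
      ∀ T : ℝ, C * ε ^ (-((p - 1) / (-a))) ≤ T →
        ¬ ∃ U : ℝ → ℝ → ℝ, IsIntSol p a b R ε T f g U :=
  blow_up_a_neg_general p a b R f g hp ha hR hf hg hsf hsg hgint
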